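/- The relation ≤⊥r (g ≤⊥r h iff there exists a rigid ⊥-homomorphism from g to h) is a partial order on the set of canonical partial term graphs over a signature Σ: it is reflexive, transitive, and antisymmetric. -/

import Mathlib

set_option autoImplicit false

namespace TGR

/-- A signature: a type of symbols, each with a finite arity. -/
structure Signature where
  Sym : Type
  ar : Sym → ℕ

/-- The signature `Σ_⊥`: `Σ` extended by a fresh nullary symbol `⊥` (here `none`). -/
def Signature.bot (S : Signature) : Signature where
  Sym := Option S.Sym
  ar := fun o => match o with
    | none => 0
    | some f => S.ar f

/-- A rooted graph over a signature `S` with nodes `N`: a labelling, a successor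
function respecting arities, and a root node. -/
structure TermGraph (S : Signature) (N : Type) where
  lab : N → S.Sym
  suc : (n : N) → Fin (S.ar (lab n)) → N
  root : N

namespace TermGraph

variable {S : Signature} {N M K : Type}

/-- `g.IsPos π n`: `π` is a position (path of successor indices from the root) of node `n`. -/
inductive IsPos (g : TermGraph S N) : List ℕ → N → Prop
  | root : IsPos g [] g.root
  | step {π : List ℕ} {n : N} (h : IsPos g π n) (i : Fin (S.ar (g.lab n))) :
      IsPos g (π ++ [(i : ℕ)]) (g.suc n i)

/-- All nodes are reachable from the root. -/
def Reachable (g : TermGraph S N) : Prop :=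
  ∀ n : N, ∃ π : List ℕ, g.IsPos π n

/-- The set of positions of `g`. -/
def pos (g : TermGraph S N) : Set (List ℕ) :=
  {π | ∃ n : N, g.IsPos π n}

/-- The set of positions of node `n` in `g`. -/
def nodePos (g : TermGraph S N) (n : N) : Set (List ℕ) :=
  {π | g.IsPos π n}

/-- `π ∼_g π'`: `π` and `π'` are positions of the same node. -/
def Aliases (g : TermGraph S N) (π π' : List ℕ) : Prop :=
  ∃ n : N, g.IsPos π n ∧ g.IsPos π' n

/-- A position is acyclic if it passes no node twice. -/
def IsAcyclicPos (g : TermGraph S N) (π : List ℕ) : Prop :=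
  ∀ (π₁ π₂ : List ℕ) (n : N), π₁ <+: π₂ → π₂ <+: π →
    g.IsPos π₁ n → g.IsPos π₂ n → π₁ = π₂

/-- The set of acyclic positions of node `n` in `g`. -/
def nodePosAcy (g : TermGraph S N) (n : N) : Set (List ℕ) :=
  {π | g.IsPos π n ∧ g.IsAcyclicPos π}

/-- The set of acyclic positions of `g`. -/
def posAcy (g : TermGraph S N) : Set (List ℕ) :=
  {π | (∃ n : N, g.IsPos π n) ∧ g.IsAcyclicPos π}

/-- The depth of a node: the minimal length of its positions. -/
noncomputable def depth (g : TermGraph S N) (n : N) : ℕ :=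
  sInf {k : ℕ | ∃ π : List ℕ, g.IsPos π n ∧ π.length = k}

open Classical in
/-- The (unique) node at a position. -/
noncomputable def nodeAt (g : TermGraph S N) (π : List ℕ) : N :=
  if h : ∃ n : N, g.IsPos π n then h.choose else g.root

/-- The label `g(π)` at a position. -/
noncomputable def labAt (g : TermGraph S N) (π : List ℕ) : S.Sym :=
  g.lab (g.nodeAt π)

/-- `Δ`-homomorphism: root, labelling and successor conditions, the latter two
suspended on `Δ`-labelled nodes. -/
structure IsDHom (Δ : Set S.Sym) (g : TermGraph S N) (h : TermGraph S M)
    (φ : N → M) : Prop where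
  root_eq : φ g.root = h.root
  lab_eq : ∀ n : N, g.lab n ∉ Δ → h.lab (φ n) = g.lab n
  suc_eq : ∀ n : N, g.lab n ∉ Δ → ∀ (i : ℕ) (hi : i < S.ar (g.lab n))
      (hi' : i < S.ar (h.lab (φ n))),
      φ (g.suc n ⟨i, hi⟩) = h.suc (φ n) ⟨i, hi'⟩

/-- Rigidity: `Pa_g(n) = Pa_h(φ n)` for all non-`Δ`-labelled nodes `n`. -/
def IsRigid (Δ : Set S.Sym) (g : TermGraph S N) (h : TermGraph S M)
    (φ : N → M) : Prop :=
  ∀ n : N, g.lab n ∉ Δ → g.nodePosAcy n = h.nodePosAcy (φ n)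

/-- Rigid `Δ`-homomorphism. -/
def IsRigidDHom (Δ : Set S.Sym) (g : TermGraph S N) (h : TermGraph S M)
    (φ : N → M) : Prop :=
  IsDHom Δ g h φ ∧ IsRigid Δ g h φ

/-- Isomorphism of term graphs: a homomorphism with an inverse homomorphism. -/
def Iso (g : TermGraph S N) (h : TermGraph S M) : Prop :=
  ∃ (φ : N → M) (ψ : M → N), IsDHom ∅ g h φ ∧ IsDHom ∅ h g ψ ∧
    (∀ n : N, ψ (φ n) = n) ∧ (∀ m : M, φ (ψ m) = m)

/-- A partial term graph (over `Σ_⊥`) is total if no node is labelled `⊥`. -/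
def Total (g : TermGraph S.bot N) : Prop := ∀ n : N, g.lab n ≠ none

/-- Rigid `⊥`-homomorphism between partial term graphs. -/
def IsRigidBotHom (g : TermGraph S.bot N) (h : TermGraph S.bot M)
    (φ : N → M) : Prop :=
  IsRigidDHom ({none} : Set (Option S.Sym)) g h φ

/-- The `⊥`-depth of a partial term graph: the minimal depth of a `⊥`-labelled
node, `ω` (`⊤`) if there is none. -/
noncomputable def botDepth (g : TermGraph S.bot N) : ℕ∞ :=
  sInf {d : ℕ∞ | ∃ n : N, g.lab n = none ∧ (g.depth n : ℕ∞) = d}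

/-- `m` is an acyclic predecessor of `n`: some acyclic position `π ++ [i]` of `n`
has `π` a position of `m`. -/
def acyPred (g : TermGraph S N) (n : N) : Set N :=
  {m | ∃ (π : List ℕ) (i : ℕ), (π ++ [i]) ∈ g.nodePosAcy n ∧ g.IsPos π m}

/-- Retained nodes of the truncation at depth `d`: the least set of nodes
containing all nodes of depth `< d` and closed under acyclic predecessors. -/
inductive Retained (g : TermGraph S N) (d : ℕ) : N → Prop
  | shallow {n : N} : g.depth n < d → Retained g d n
  | pred {n m : N} : Retained g d n → m ∈ g.acyPred n → Retained g d m

theorem not_retained_zero {g : TermGraph S N} (n : N) : ¬ g.Retained 0 n := by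
  intro h
  induction h with
  | shallow hd => exact Nat.not_lt_zero _ hd
  | pred _ _ ih => exact ih

/-- Fringe nodes of the truncation at depth `d` (a pair `(n, i)` stands for the
fresh node `n^i`); at depth `0` the fringe is just (a copy of) the root. -/
def IsFringe (g : TermGraph S.bot N) (d : ℕ) (p : N × ℕ) : Prop :=
  if d = 0 then p = (g.root, 0)
  else g.Retained d p.1 ∧ ∃ h : p.2 < S.bot.ar (g.lab p.1),
    (¬ g.Retained d (g.suc p.1 ⟨p.2, h⟩) ∨
      (d - 1 ≤ g.depth p.1 ∧ p.1 ∉ g.acyPred (g.suc p.1 ⟨p.2, h⟩)))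

/-- The node set of the rigid truncation: retained nodes plus fringe nodes. -/
def TNode (g : TermGraph S.bot N) (d : ℕ) : Type :=
  {x : N ⊕ (N × ℕ) // Sum.elim (g.Retained d) (g.IsFringe d) x}

def truncLab (g : TermGraph S.bot N) (d : ℕ) (x : TNode g d) : S.bot.Sym :=
  Sum.elim (fun n => g.lab n) (fun _ => none) x.1

open Classical in
noncomputable def truncSuc (g : TermGraph S.bot N) (d : ℕ) :
    (x : TNode g d) → Fin (S.bot.ar (truncLab g d x)) → TNode g d
  | ⟨Sum.inl n, hn⟩ => fun i =>
      if hf : g.IsFringe d (n, (i : ℕ)) then ⟨Sum.inr (n, (i : ℕ)), hf⟩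
      else
        ⟨Sum.inl (g.suc n ⟨(i : ℕ), i.isLt⟩), by
          show g.Retained d (g.suc n ⟨(i : ℕ), i.isLt⟩)
          rcases Nat.eq_zero_or_pos d with hd | hd
          · subst hd
            exact ((not_retained_zero n) hn).elim
          · by_contra hc
            apply hf
            show g.IsFringe d (n, (i : ℕ))
            unfold IsFringe
            rw [if_neg (Nat.pos_iff_ne_zero.mp hd)]
            exact ⟨hn, i.isLt, Or.inl hc⟩⟩
  | ⟨Sum.inr p, hp⟩ => fun i => absurd i.isLt (Nat.not_lt_zero _)

noncomputable def truncRoot (g : TermGraph S.bot N) (d : ℕ) : TNode g d :=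
  if hd : d = 0 then
    ⟨Sum.inr (g.root, 0), by
      subst hd
      show g.IsFringe 0 (g.root, 0)
      simp [IsFringe]⟩
  else
    ⟨Sum.inl g.root, by
      show g.Retained d g.root
      exact Retained.shallow (lt_of_le_of_lt
        (Nat.sInf_le ⟨[], IsPos.root, rfl⟩) (Nat.pos_of_ne_zero hd))⟩

/-- The rigid truncation `g†d` of a partial term graph at finite depth `d`. -/
noncomputable def trunc (g : TermGraph S.bot N) (d : ℕ) :
    TermGraph S.bot (TNode g d) where
  lab := truncLab g d
  suc := truncSuc g d
  root := truncRoot g d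

end TermGraph

/-- A canonical term graph: a term graph whose nodes are sets of positions,
each node being exactly its set of positions, with all nodes reachable. -/
structure CTG (S : Signature) where
  nodes : Set (Set (List ℕ))
  tg : TermGraph S ↥nodes
  reach : tg.Reachable
  canon : ∀ n : ↥nodes, (n : Set (List ℕ)) = tg.nodePos n

namespace CTG

variable {S : Signature}

def pos (g : CTG S) : Set (List ℕ) := g.tg.pos
def Aliases (g : CTG S) : List ℕ → List ℕ → Prop := g.tg.Aliases
def posAcy (g : CTG S) : Set (List ℕ) := g.tg.posAcy
noncomputable def labAt (g : CTG S) : List ℕ → S.Sym := g.tg.labAt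

/-- A canonical partial term graph is total if it has no `⊥`-labelled node. -/
def Total (g : CTG S.bot) : Prop := g.tg.Total

/-- The rigid partial order `g ≤⊥r h`: there is a rigid `⊥`-homomorphism
from `g` to `h`. -/
def LeR (g h : CTG S.bot) : Prop :=
  ∃ φ, TermGraph.IsRigidBotHom g.tg h.tg φ

noncomputable def botDepth (g : CTG S.bot) : ℕ∞ := g.tg.botDepth

/-- `TruncIso g h d`: the rigid truncations of `g` and `h` at depth `d ≤ ω`
are isomorphic (`g†ω = g`). -/
def TruncIso {N M : Type} (g : TermGraph S.bot N) (h : TermGraph S.bot M)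
    (d : ℕ∞) : Prop :=
  (d = ⊤ → TermGraph.Iso g h) ∧
  ∀ k : ℕ, d = (k : ℕ∞) → TermGraph.Iso (g.trunc k) (h.trunc k)

/-- The rigid similarity `sim†(g,h)`: the maximal `d ≤ ω` such that
`g†d ≅ h†d`. -/
noncomputable def simr (g h : CTG S.bot) : ℕ∞ :=
  sSup {d : ℕ∞ | TruncIso g.tg h.tg d}

open Classical in
/-- The rigid distance `d†(g,h) = 2^{-sim†(g,h)}` (with `2^{-ω} = 0`). -/
noncomputable def rdist (g h : CTG S.bot) : ℝ :=
  if simr g h = ⊤ then 0 else (1 / 2 : ℝ) ^ (simr g h).toNat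

def IsUB (A : Set (CTG S.bot)) (u : CTG S.bot) : Prop := ∀ g ∈ A, LeR g u

def IsLubR (A : Set (CTG S.bot)) (u : CTG S.bot) : Prop :=
  IsUB A u ∧ ∀ v, IsUB A v → LeR u v

def IsLB (A : Set (CTG S.bot)) (l : CTG S.bot) : Prop := ∀ g ∈ A, LeR l g

def IsGlbR (A : Set (CTG S.bot)) (l : CTG S.bot) : Prop :=
  IsLB A l ∧ ∀ m, IsLB A m → LeR m l

/-- A directed set: non-empty and every two elements have an upper bound inside. -/
def DirectedR (A : Set (CTG S.bot)) : Prop :=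
  A.Nonempty ∧ ∀ g ∈ A, ∀ h ∈ A, ∃ u ∈ A, LeR g u ∧ LeR h u

/-- `L` is the limit inferior `⨆_{β<α} ⨅_{β≤ι<α} f ι` of the ordinal-indexed
sequence `(f ι)_{ι<α}` in the rigid partial order. -/
def IsLiminfR (α : Ordinal.{0}) (f : Ordinal.{0} → CTG S.bot) (L : CTG S.bot) : Prop :=
  ∃ inf : Ordinal.{0} → CTG S.bot,
    (∀ β < α, IsGlbR {g | ∃ ι, β ≤ ι ∧ ι < α ∧ g = f ι} (inf β)) ∧
    IsLubR {g | ∃ β < α, g = inf β} L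

/-- Cauchy condition for an ordinal-indexed sequence w.r.t. the rigid distance. -/
def OrdCauchy (α : Ordinal.{0}) (f : Ordinal.{0} → CTG S.bot) : Prop :=
  ∀ ε : ℝ, 0 < ε → ∃ β < α, ∀ ι ι' : Ordinal.{0},
    β < ι → ι < ι' → ι' < α → rdist (f ι) (f ι') < ε

/-- Convergence of an ordinal-indexed sequence to `g` w.r.t. the rigid distance. -/
def OrdTendsto (α : Ordinal.{0}) (f : Ordinal.{0} → CTG S.bot) (g : CTG S.bot) : Prop :=
  ∀ ε : ℝ, 0 < ε → ∃ β < α, ∀ ι : Ordinal.{0}, β < ι → ι < α → rdist (f ι) g < ε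

/-- `u` is the unravelling of `g`: the term tree with the same positions and
labels as `g` and trivial aliasing. -/
def IsUnravelling (g u : CTG S) : Prop :=
  u.pos = g.pos ∧ (∀ π ∈ g.pos, u.labAt π = g.labAt π) ∧
  (∀ π π' : List ℕ, u.Aliases π π' ↔ (π ∈ g.pos ∧ π = π'))

end CTG

/-- A labelled quotient tree over a signature `S`. -/
structure LQT (S : Signature) where
  P : Set (List ℕ)
  nonempty : P.Nonempty
  l : List ℕ → S.Sym
  rel : List ℕ → List ℕ → Prop
  rel_refl : ∀ π ∈ P, rel π π
  rel_symm : ∀ π π' : List ℕ, rel π π' → rel π' π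
  rel_trans : ∀ π π' π'' : List ℕ, rel π π' → rel π' π'' → rel π π''
  rel_mem : ∀ π π' : List ℕ, rel π π' → π ∈ P ∧ π' ∈ P
  reach_mem : ∀ (π : List ℕ) (i : ℕ), π ++ [i] ∈ P → π ∈ P
  reach_ar : ∀ (π : List ℕ) (i : ℕ), π ++ [i] ∈ P → i < S.ar (l π)
  congr_lab : ∀ π π' : List ℕ, rel π π' → l π = l π'
  congr_suc : ∀ (π π' : List ℕ) (i : ℕ), rel π π' → i < S.ar (l π) →
    rel (π ++ [i]) (π' ++ [i])

end TGR

/-!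
Rigid `⊥`-homomorphisms contain the identity and are closed under composition. For
antisymmetry, a `⊥`-homomorphism preserves positions and every node is reachable, so a
homomorphism out of a term graph is unique; hence `φ : g → h` and `ψ : h → g` are mutually
inverse and `φ n` has exactly the positions of `n`. In a canonical term graph a node *is* its set
of positions, so `φ` is the identity, and then `g` and `h` coincide.
-/

namespace TGR

theorem Signature.bot_ar_eq_zero_of_mem (S : Signature) :
    ∀ f ∈ ({none} : Set S.bot.Sym), S.bot.ar f = 0 := by
  rintro _ rfl
  rfl

namespace TermGraph

variable {S : Signature} {N M K : Type} {Δ : Set S.Sym}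

theorem isPos_nil_iff {g : TermGraph S N} {n : N} : g.IsPos [] n ↔ n = g.root := by
  refine ⟨fun h => ?_, fun h => h ▸ IsPos.root⟩
  generalize hπ : ([] : List ℕ) = π at h
  cases h with
  | root => rfl
  | step => simp at hπ

theorem isPos_append_singleton_iff {g : TermGraph S N} {π : List ℕ} {i : ℕ} {n : N} :
    g.IsPos (π ++ [i]) n ↔
      ∃ (m : N) (hi : i < S.ar (g.lab m)), g.IsPos π m ∧ n = g.suc m ⟨i, hi⟩ := by
  refine ⟨fun h => ?_, ?_⟩
  · generalize hπ : π ++ [i] = ρ at h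
    cases h with
    | root => simp at hπ
    | step hm j =>
      obtain ⟨rfl, hij⟩ := List.append_inj' hπ rfl
      obtain rfl : i = j := by simpa using hij
      exact ⟨_, j.isLt, hm, rfl⟩
  · rintro ⟨m, hi, hm, rfl⟩
    exact hm.step ⟨i, hi⟩

theorem IsPos.unique {g : TermGraph S N} {π : List ℕ} {n m : N} (hn : g.IsPos π n)
    (hm : g.IsPos π m) : n = m := by
  induction π using List.reverseRecOn generalizing n m with
  | nil => rw [isPos_nil_iff.mp hn, isPos_nil_iff.mp hm]
  | append_singleton π i ih =>
    obtain ⟨n', hi, hn', rfl⟩ := isPos_append_singleton_iff.mp hn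
    obtain ⟨m', hi', hm', rfl⟩ := isPos_append_singleton_iff.mp hm
    obtain rfl := ih hn' hm'
    rfl

theorem notMem_of_lt_ar (hΔ : ∀ f ∈ Δ, S.ar f = 0) {f : S.Sym} {i : ℕ} (hi : i < S.ar f) :
    f ∉ Δ :=
  fun hf => by simp [hΔ f hf] at hi

theorem IsDHom.id {g : TermGraph S N} : IsDHom Δ g g id :=
  ⟨rfl, fun _ _ => rfl, fun _ _ _ _ _ => rfl⟩

theorem IsDHom.comp {g : TermGraph S N} {h : TermGraph S M} {k : TermGraph S K}
    {φ : N → M} {ψ : M → K} (hψ : IsDHom Δ h k ψ) (hφ : IsDHom Δ g h φ) :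
    IsDHom Δ g k (ψ ∘ φ) where
  root_eq := by rw [Function.comp_apply, hφ.root_eq, hψ.root_eq]
  lab_eq n hn := by
    rw [Function.comp_apply, hψ.lab_eq (φ n) (hφ.lab_eq n hn ▸ hn), hφ.lab_eq n hn]
  suc_eq n hn i hi hi' := by
    have hi_h : i < S.ar (h.lab (φ n)) := hφ.lab_eq n hn ▸ hi
    rw [Function.comp_apply, hφ.suc_eq n hn i hi hi_h,
      hψ.suc_eq (φ n) (hφ.lab_eq n hn ▸ hn) i hi_h hi']
    rfl

theorem IsRigidDHom.id {g : TermGraph S N} : IsRigidDHom Δ g g id :=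
  ⟨IsDHom.id, fun _ _ => rfl⟩

theorem IsRigidDHom.comp {g : TermGraph S N} {h : TermGraph S M} {k : TermGraph S K}
    {φ : N → M} {ψ : M → K} (hψ : IsRigidDHom Δ h k ψ) (hφ : IsRigidDHom Δ g h φ) :
    IsRigidDHom Δ g k (ψ ∘ φ) :=
  ⟨hψ.1.comp hφ.1, fun n hn => (hφ.2 n hn).trans (hψ.2 (φ n) (hφ.1.lab_eq n hn ▸ hn))⟩

theorem IsDHom.isPos (hΔ : ∀ f ∈ Δ, S.ar f = 0) {g : TermGraph S N} {h : TermGraph S M}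
    {φ : N → M} (hφ : IsDHom Δ g h φ) {π : List ℕ} {n : N} (hn : g.IsPos π n) :
    h.IsPos π (φ n) := by
  induction hn with
  | root => rw [hφ.root_eq]; exact IsPos.root
  | step _ i ih =>
    rename_i m _
    have hm : g.lab m ∉ Δ := notMem_of_lt_ar hΔ i.isLt
    have hi : (i : ℕ) < S.ar (h.lab (φ m)) := by rw [hφ.lab_eq m hm]; exact i.isLt
    rw [hφ.suc_eq m hm i i.isLt hi]
    exact ih.step ⟨i, hi⟩

theorem IsDHom.nodePos_subset (hΔ : ∀ f ∈ Δ, S.ar f = 0) {g : TermGraph S N} {h : TermGraph S M}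
    {φ : N → M} (hφ : IsDHom Δ g h φ) (n : N) : g.nodePos n ⊆ h.nodePos (φ n) :=
  fun _ => hφ.isPos hΔ

theorem IsDHom.eq_of_reachable (hΔ : ∀ f ∈ Δ, S.ar f = 0) {g : TermGraph S N} {h : TermGraph S M}
    {φ φ' : N → M} (hg : g.Reachable) (hφ : IsDHom Δ g h φ) (hφ' : IsDHom Δ g h φ') :
    φ = φ' := by
  funext n
  obtain ⟨π, hπ⟩ := hg n
  exact (hφ.isPos hΔ hπ).unique (hφ'.isPos hΔ hπ)

theorem eq_of_isDHom_id (hΔ : ∀ f ∈ Δ, S.ar f = 0) (hΔ₁ : Δ.Subsingleton)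
    {g h : TermGraph S N} (hgh : IsDHom Δ g h id) (hhg : IsDHom Δ h g id) : g = h := by
  have hlab : g.lab = h.lab := by
    funext n
    by_cases hg : g.lab n ∈ Δ
    · by_cases hh : h.lab n ∈ Δ
      · exact hΔ₁ hg hh
      · exact hhg.lab_eq n hh
    · exact (hgh.lab_eq n hg).symm
  obtain ⟨lab, sucg, rootg⟩ := g
  obtain ⟨_, such, rooth⟩ := h
  obtain rfl : lab = _ := hlab
  obtain rfl : rootg = rooth := hgh.root_eq
  congr
  funext n i
  exact hgh.suc_eq n (notMem_of_lt_ar hΔ i.isLt) i i.isLt i.isLt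

end TermGraph

namespace CTG

open TermGraph

variable {S : Signature} {Δ : Set S.Sym}

theorem coe_apply_eq_of_isDHom (hΔ : ∀ f ∈ Δ, S.ar f = 0) {g h : CTG S}
    {φ : g.nodes → h.nodes} {ψ : h.nodes → g.nodes}
    (hφ : IsDHom Δ g.tg h.tg φ) (hψ : IsDHom Δ h.tg g.tg ψ) (n : g.nodes) :
    (φ n : Set (List ℕ)) = n := by
  have hψφ : ψ (φ n) = n := congrFun ((hψ.comp hφ).eq_of_reachable hΔ g.reach IsDHom.id) n
  rw [g.canon n, h.canon (φ n)]
  refine (Set.Subset.antisymm (hφ.nodePos_subset hΔ n) ?_).symm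
  exact (hψ.nodePos_subset hΔ (φ n)).trans (by rw [hψφ])

theorem eq_of_isDHom (hΔ : ∀ f ∈ Δ, S.ar f = 0) (hΔ₁ : Δ.Subsingleton) {g h : CTG S}
    {φ : g.nodes → h.nodes} {ψ : h.nodes → g.nodes}
    (hφ : IsDHom Δ g.tg h.tg φ) (hψ : IsDHom Δ h.tg g.tg ψ) : g = h := by
  have hφ_coe := coe_apply_eq_of_isDHom hΔ hφ hψ
  have hψ_coe := coe_apply_eq_of_isDHom hΔ hψ hφ
  cases g with | mk Ng tg _ _ => ?_
  cases h with | mk Nh th _ _ => ?_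
  obtain rfl : Ng = Nh := Set.Subset.antisymm
    (fun A hA => by simpa only [hφ_coe] using (φ ⟨A, hA⟩).2)
    (fun A hA => by simpa only [hψ_coe] using (ψ ⟨A, hA⟩).2)
  obtain rfl : φ = id := funext fun n => Subtype.ext (hφ_coe n)
  obtain rfl : ψ = id := funext fun n => Subtype.ext (hψ_coe n)
  obtain rfl := eq_of_isDHom_id hΔ hΔ₁ hφ hψ
  rfl

end CTG

/-- The relation `≤⊥r` (there exists a rigid `⊥`-homomorphism)
is a partial order on canonical partial term graphs: reflexive, transitive and
antisymmetric. -/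
theorem leR_partial_order (S : Signature) :
    (∀ g : CTG S.bot, CTG.LeR g g) ∧
    (∀ g h k : CTG S.bot, CTG.LeR g h → CTG.LeR h k → CTG.LeR g k) ∧
    (∀ g h : CTG S.bot, CTG.LeR g h → CTG.LeR h g → g = h) := by
  refine ⟨fun g => ⟨id, TermGraph.IsRigidDHom.id⟩, ?_, ?_⟩
  · rintro g h k ⟨φ, hφ⟩ ⟨ψ, hψ⟩
    exact ⟨ψ ∘ φ, hψ.comp hφ⟩
  · rintro g h ⟨φ, hφ, -⟩ ⟨ψ, hψ, -⟩
    exact CTG.eq_of_isDHom S.bot_ar_eq_zero_of_mem Set.subsingleton_singleton hφ hψ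

end TGR
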